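/- arXiv:2205.09168 — 2 statements merged into one kernel-verified Lean document; each statement's English description precedes it below -/
import Mathlib

section
/- If G is acyclic, then F_G equals the convex hull of the signed characteristic vectors of the routes of G: F_G = conv{ x_R : R a route of G }. -/
namespace FP

/-- The three possible types of an edge `(i,j)` with `i < j`. -/
inductive EdgeType : Type
  | forward
  | backward
  | bidirectional
  deriving DecidableEq

/-- An edge is a pair of endpoints `(i,j)` (with the convention `i < j`
for well-formed graphs) together with its type. -/
abbrev GEdge : Type := ℕ × ℕ × EdgeType

/-- A directed multigraph given by a list of edges, together with a
distinguished source and sink vertex. -/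
structure LGraph : Type where
  edges : List GEdge
  src : ℕ
  snk : ℕ

namespace LGraph

/-- The number of edges. -/
def m (G : LGraph) : ℕ := G.edges.length

/-- The smaller endpoint of the `e`-th edge. -/
def tail (G : LGraph) (e : Fin G.m) : ℕ := (G.edges.get e).1

/-- The larger endpoint of the `e`-th edge. -/
def head (G : LGraph) (e : Fin G.m) : ℕ := (G.edges.get e).2.1

/-- The type of the `e`-th edge. -/
def etype (G : LGraph) (e : Fin G.m) : EdgeType := (G.edges.get e).2.2

/-- Wellformedness: the graph has vertex set `{1,…,n}` and each edge `(i,j)`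
satisfies `i < j`. -/
def WF (G : LGraph) (n : ℕ) : Prop := ∀ e ∈ G.edges, 1 ≤ e.1 ∧ e.1 < e.2.1 ∧ e.2.1 ≤ n

/-- The netflow of `x` at the vertex `v`: total flow on edges `(v,k)`, `v < k`,
minus the total flow on edges `(i,v)`, `i < v`. -/
noncomputable def netflow (G : LGraph) (x : Fin G.m → ℝ) (v : ℕ) : ℝ :=
  ∑ e : Fin G.m, ((if G.tail e = v then x e else 0) - (if G.head e = v then x e else 0))

/-- The set of `u`-flows on `G`, where `u = e_src - e_snk`: the netflow is `1` at the
source, `-1` at the sink and `0` elsewhere, flows on forward edges are nonnegative and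
flows on backward edges are nonpositive (bidirectional edges unrestricted).  This is
the flow polytope `F_G ⊆ ℝ^m`. -/
def flowSet (G : LGraph) : Set (Fin G.m → ℝ) :=
  { x | (∀ v : ℕ, G.netflow x v = (if v = G.src then (1 : ℝ) else 0) - (if v = G.snk then 1 else 0))
      ∧ ∀ e : Fin G.m, (G.etype e = .forward → 0 ≤ x e) ∧ (G.etype e = .backward → x e ≤ 0) }

/-- One step of a directed walk: forward edges can be traversed from the smaller to the
larger endpoint, backward edges from the larger to the smaller, bidirectional edges both
ways. -/
def DStep (G : LGraph) (a b : ℕ) : Prop :=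
  ∃ e : Fin G.m, (G.tail e = a ∧ G.head e = b ∧ G.etype e ≠ .backward) ∨
                 (G.head e = a ∧ G.tail e = b ∧ G.etype e ≠ .forward)

/-- `G` is acyclic if it has no directed cycle. -/
def Acyclic (G : LGraph) : Prop := ∀ v : ℕ, ¬ Relation.TransGen G.DStep v v

/-- One step in the underlying undirected graph. -/
def UStep (G : LGraph) (a b : ℕ) : Prop :=
  ∃ e : Fin G.m, (G.tail e = a ∧ G.head e = b) ∨ (G.head e = a ∧ G.tail e = b)

/-- `G` is connected (as an undirected graph on the vertex set `{1,…,n}`). -/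
def Connected (G : LGraph) (n : ℕ) : Prop :=
  ∀ a b : ℕ, 1 ≤ a → a ≤ n → 1 ≤ b → b ≤ n → Relation.ReflTransGen G.UStep a b

/-- The starting vertex of a traversal step `(e, d)`: `d = true` means the edge `e` is
traversed from its smaller to its larger endpoint. -/
def sv (G : LGraph) (s : Fin G.m × Bool) : ℕ := if s.2 then G.tail s.1 else G.head s.1

/-- The ending vertex of a traversal step. -/
def ev (G : LGraph) (s : Fin G.m × Bool) : ℕ := if s.2 then G.head s.1 else G.tail s.1

/-- A route of `G`: a directed path from the source to the sink (not repeating edges),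
traversing each edge in a direction allowed by its type. -/
structure Route (G : LGraph) : Type where
  steps : List (Fin G.m × Bool)
  ne : steps ≠ []
  chain : steps.Chain' (fun s t => G.ev s = G.sv t)
  first : G.sv (steps.head ne) = G.src
  last : G.ev (steps.getLast ne) = G.snk
  dir : ∀ s ∈ steps, (s.2 = true → G.etype s.1 ≠ .backward) ∧ (s.2 = false → G.etype s.1 ≠ .forward)
  nodup : (steps.map Prod.fst).Nodup

/-- The signed characteristic vector of a route: `+1` on edges traversed from smaller to
larger endpoint, `-1` on edges traversed from larger to smaller endpoint, `0` on unused
edges. -/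
noncomputable def Route.vec {G : LGraph} (R : Route G) : Fin G.m → ℝ := fun e =>
  if (e, true) ∈ R.steps then 1 else if (e, false) ∈ R.steps then -1 else 0

end LGraph

/-- A point of `ℝ^α` is a lattice point if all its coordinates are integers. -/
def IsLatticePt {α : Type*} (x : α → ℝ) : Prop := ∀ i, ∃ z : ℤ, x i = (z : ℝ)

/-- Integral equivalence of two subsets `P ⊆ ℝ^α`, `Q ⊆ ℝ^β`: an affine map `φ` restricting
to a bijection from `P` onto `Q` and to a bijection between the lattice points of the
affine hull of `P` and those of the affine hull of `Q`. -/
def IntEquiv {α β : Type*} (P : Set (α → ℝ)) (Q : Set (β → ℝ)) : Prop :=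
  ∃ φ : (α → ℝ) →ᵃ[ℝ] (β → ℝ),
    Set.BijOn φ P Q ∧
    Set.BijOn φ ({x | IsLatticePt x} ∩ (affineSpan ℝ P : Set (α → ℝ)))
                ({x | IsLatticePt x} ∩ (affineSpan ℝ Q : Set (β → ℝ)))

/-! ### Lattice paths and the canonical indexing -/

/-- A lattice path is a list of letters, `true` = E-step `(1,0)`, `false` = N-step `(0,1)`.
`ovl ν` is the path `ν̄ = E ν N`. -/
def ovl (ν : List Bool) : List Bool := true :: ν ++ [false]

/-- Auxiliary function for the canonical indexing: `prev` is the previous letter,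
`k` is the last index used. -/
def canonIdxAux : List Bool → Bool → ℕ → List ℕ
  | [], _, _ => []
  | c :: rest, prev, k =>
    if prev && !c then k :: canonIdxAux rest c k
    else (k + 1) :: canonIdxAux rest c (k + 1)

/-- The canonical indexing of a word in `{E,N}`: reading left to right, each letter
receives the next positive integer, except that the first `N` of a maximal run of `N`s
receives the index of the immediately preceding `E` step. -/
def canonIdx (w : List Bool) : List ℕ := canonIdxAux w false 0

/-- The letter at position `p` (`true` = E). -/
def letterAt (w : List Bool) (p : ℕ) : Bool := w.getD p false

/-- The canonical index of the letter at position `p`. -/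
def idxAt (w : List Bool) (p : ℕ) : ℕ := (canonIdx w).getD p 0

/-- The largest canonical index `n` of the word `w`. -/
def nIdx (w : List Bool) : ℕ := idxAt w (w.length - 1)

/-- The set `I` of indices of E steps. -/
def Iset (w : List Bool) : Finset ℕ :=
  (((List.range w.length).filter (fun p => letterAt w p)).map (idxAt w)).toFinset

/-- The set `J` of indices of N steps. -/
def Jset (w : List Bool) : Finset ℕ :=
  (((List.range w.length).filter (fun p => !letterAt w p)).map (idxAt w)).toFinset

/-- The set `I ∩ J` of indices of valleys. -/
def Vset (w : List Bool) : Finset ℕ := Iset w ∩ Jset w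

/-- The valleys `v_1 < v_2 < ⋯ < v_w` as a sorted list. -/
def valleyList (w : List Bool) : List ℕ := (Vset w).sort (· ≤ ·)

/-- The number `w` of valleys. -/
def numVal (w : List Bool) : ℕ := (valleyList w).length

/-- The `k`-th valley `v_k` (`1 ≤ k ≤ numVal w`). -/
def vv (w : List Bool) (k : ℕ) : ℕ := (valleyList w).getD (k - 1) 0

/-! ### The ν-graph, its bidirectional version and partial augmentations -/

/-- `(i,j)` is an edge of the ν-graph iff `E_i ⋯ N_j` is a consecutive subword of `w`
whose only valleys are `E_k N_k` with `k = i` or `k = j`. -/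
def isNuEdgeB (w : List Bool) (i j : ℕ) : Bool :=
  (List.range w.length).any fun p =>
    (List.range w.length).any fun q =>
      decide (p < q) && letterAt w p && !letterAt w q &&
      decide (idxAt w p = i) && decide (idxAt w q = j) &&
      ((List.range w.length).all fun r =>
        !(decide (p ≤ r) && decide (r + 1 ≤ q) && letterAt w r && !letterAt w (r + 1)) ||
        decide (idxAt w r = i) || decide (idxAt w r = j))

/-- The list of edges `(i,j)`, `i < j`, of the ν-graph `G(ν)` (where `w = ν̄`). -/
def nuEdgePairs (w : List Bool) : List (ℕ × ℕ) :=
  ((List.range (nIdx w + 1)).flatMap fun i =>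
    (List.range (nIdx w + 1)).map fun j => (i, j)).filter
    fun p => decide (p.1 < p.2) && isNuEdgeB w p.1 p.2

/-- The edges of `G(ν)`, all forward. -/
def Gedges (w : List Bool) : List GEdge :=
  (nuEdgePairs w).map fun p => (p.1, p.2, EdgeType.forward)

/-- The edges of the bidirectional ν-graph `G_B(ν)`: an edge is bidirectional exactly
when both of its endpoints lie in `I ∩ J`. -/
def GBedges (w : List Bool) : List GEdge :=
  (nuEdgePairs w).map fun p =>
    (p.1, p.2, if p.1 ∈ Vset w ∧ p.2 ∈ Vset w then EdgeType.bidirectional else EdgeType.forward)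

/-- Out-degree of a vertex in an edge list: the number of edges traversable out of `v`. -/
def outDegL (E : List GEdge) (v : ℕ) : ℕ :=
  (E.filter fun e => (decide (e.1 = v) && decide (e.2.2 ≠ EdgeType.backward)) ||
                     (decide (e.2.1 = v) && decide (e.2.2 ≠ EdgeType.forward))).length

/-- In-degree of a vertex in an edge list: the number of edges traversable into `v`. -/
def inDegL (E : List GEdge) (v : ℕ) : ℕ :=
  (E.filter fun e => (decide (e.2.1 = v) && decide (e.2.2 ≠ EdgeType.backward)) ||
                     (decide (e.1 = v) && decide (e.2.2 ≠ EdgeType.forward))).length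

/-- The full augmentation of an edge list on inner vertices `1,…,n`: add a source `s = 0`
and a sink `t = n+1` together with forward edges `(s,i)` and `(i,t)` for all `i`. -/
def fullAug (n : ℕ) (E : List GEdge) : List GEdge :=
  E ++ ((List.range n).map fun i => (0, i + 1, EdgeType.forward))
    ++ ((List.range n).map fun i => (i + 1, n + 1, EdgeType.forward))

/-- The partial augmentation: the full augmentation with the edges `(s,i)` for which `i`
has out-degree one, and the edges `(j,t)` for which `j` has in-degree one, removed. -/
def partAug (n : ℕ) (E : List GEdge) : List GEdge :=
  E ++ ((List.range n).filterMap fun i =>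
          if outDegL (fullAug n E) (i + 1) = 1 then none else some (0, i + 1, EdgeType.forward))
    ++ ((List.range n).filterMap fun j =>
          if inDegL (fullAug n E) (j + 1) = 1 then none else some (j + 1, n + 1, EdgeType.forward))

/-- The graph `G̃_B(ν)`: the partial augmentation of the bidirectional ν-graph, with
source `s = 0` and sink `t = n+1`. -/
def GBt (w : List Bool) : LGraph := ⟨partAug (nIdx w) (GBedges w), 0, nIdx w + 1⟩

/-- The graph `G̃(ν)`: the partial augmentation of the ν-graph. -/
def Gt (w : List Bool) : LGraph := ⟨partAug (nIdx w) (Gedges w), 0, nIdx w + 1⟩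

/-- The edges of the graph `G(ν,k)`: the bidirectional path of `G_B(ν)` is replaced by
`C_ν(k)`, i.e. all edges are made forward, the forward edge `(v_k, v_{k+1})` is removed
and the backward edge `(v_1, v_w)` is added when `k < w` (for `k = w` nothing changes). -/
def GnuIedges (w : List Bool) (k : ℕ) : List GEdge :=
  ((nuEdgePairs w).filterMap fun p =>
    if k < numVal w ∧ p = (vv w k, vv w (k + 1)) then none
    else some (p.1, p.2, EdgeType.forward))
  ++ (if k < numVal w then [(vv w 1, vv w (numVal w), EdgeType.backward)] else [])

/-- The graph `G̃(ν,k)`: the partial augmentation of `G(ν,k)`. -/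
def Gnut (w : List Bool) (k : ℕ) : LGraph := ⟨partAug (nIdx w) (GnuIedges w k), 0, nIdx w + 1⟩

/-- All candidate edges on the vertex set `{0,1,…,n+1}`. -/
def allCand (n : ℕ) : List GEdge :=
  (List.range (n + 2)).flatMap fun a =>
    (List.range (n + 2)).flatMap fun b =>
      [(a, b, EdgeType.forward), (a, b, EdgeType.backward), (a, b, EdgeType.bidirectional)]

/-- The intersection `∩_{k ∈ S} G̃(ν,k)` of the partial augmentations of the graphs
`G(ν,k)`, `k ∈ S`, as a graph with source `0` and sink `n+1`. -/
def interGraph (w : List Bool) (S : Finset ℕ) : LGraph :=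
  ⟨(allCand (nIdx w)).filter fun e =>
      decide (∀ k ∈ S, e ∈ partAug (nIdx w) (GnuIedges w k)), 0, nIdx w + 1⟩

/-! ### The polytopes `Q_i` -/

/-- The condition on a route of `G̃_B(ν)` defining `Q_k` (`1 ≤ k < w`): the route does not
traverse the bidirectional edge `(v_k, v_{k+1})` forward, and traverses it backward
whenever it traverses any bidirectional edge backward. -/
def QRoute (w : List Bool) (k : ℕ) (R : LGraph.Route (GBt w)) : Prop :=
  (∀ e : Fin (GBt w).m, (GBt w).tail e = vv w k → (GBt w).head e = vv w (k + 1) →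
      (e, true) ∉ R.steps) ∧
  ((∃ s ∈ R.steps, s.2 = false) →
      ∃ e : Fin (GBt w).m, (GBt w).tail e = vv w k ∧ (GBt w).head e = vv w (k + 1) ∧
        (e, false) ∈ R.steps)

/-- The polytope `Q_k` for `1 ≤ k ≤ w`.  For `k < w` it is the convex hull of the signed
characteristic vectors of the routes satisfying `QRoute`, and `Q_w` is the flow polytope
`F_{G̃(ν)}` viewed inside `F_{G̃_B(ν)}` (the nonnegative flows). -/
def Qset (w : List Bool) (k : ℕ) : Set (Fin (GBt w).m → ℝ) :=
  if k = numVal w then { x ∈ (GBt w).flowSet | ∀ e, 0 ≤ x e }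
  else convexHull ℝ { x | ∃ R : LGraph.Route (GBt w), QRoute w k R ∧ x = R.vec }

/-! ### Products of simplices -/

/-- The `i`-th standard basis vector. -/
def stdBasisVec {α : Type*} [DecidableEq α] (i : α) : α → ℝ := fun k => if k = i then 1 else 0

/-- The product of simplices `Δ_a × Δ_b = conv{(e_i, e_j)} ⊆ ℝ^{a+1} × ℝ^{b+1}`. -/
def prodSimplices (a b : ℕ) : Set ((Fin (a + 1) ⊕ Fin (b + 1)) → ℝ) :=
  convexHull ℝ { x | ∃ (i : Fin (a + 1)) (j : Fin (b + 1)),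
    x = Sum.elim (stdBasisVec i) (stdBasisVec j) }

/-! ### Arcs and (I,J)-trees -/

/-- An arc on `w`: a pair `(i,j)` with `i ∈ I` and `j ∈ J`. -/
def IsArc (w : List Bool) (p : ℕ × ℕ) : Prop := p.1 ∈ Iset w ∧ p.2 ∈ Jset w

/-- The six configurations in which the arcs `(i,j) = p` and `(i',j') = q` cyclically
cross. -/
def CycCrossRaw (p q : ℕ × ℕ) : Prop :=
  (p.1 < q.1 ∧ q.1 < p.2 ∧ p.2 < q.2) ∨   -- i < i' < j < j'
  (q.2 < p.1 ∧ p.1 < q.1 ∧ q.1 < p.2) ∨   -- j' < i < i' < j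
  (p.2 < q.2 ∧ q.2 < p.1 ∧ p.1 < q.1) ∨   -- j < j' < i < i'
  (q.1 < p.2 ∧ p.2 < q.2 ∧ q.2 < p.1) ∨   -- i' < j < j' < i
  (p.1 < q.2 ∧ q.2 < q.1 ∧ q.1 < p.2) ∨   -- i < j' < i' < j
  (p.2 < p.1 ∧ p.1 < q.2 ∧ q.2 < q.1)     -- j < i < j' < i'

/-- Two arcs cyclically cross (up to swapping the roles of the two arcs). -/
def CycCross (p q : ℕ × ℕ) : Prop := CycCrossRaw p q ∨ CycCrossRaw q p

/-- A cyclic (I,J)-forest: a set of pairwise cyclically non-crossing arcs. -/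
def CycForest (w : List Bool) (F : Set (ℕ × ℕ)) : Prop :=
  (∀ p ∈ F, IsArc w p) ∧ ∀ p ∈ F, ∀ q ∈ F, p ≠ q → ¬ CycCross p q

/-- A cyclic (I,J)-tree: a maximal cyclic (I,J)-forest. -/
def CycTree (w : List Bool) (T : Set (ℕ × ℕ)) : Prop :=
  CycForest w T ∧ ∀ T', CycForest w T' → T ⊆ T' → T' = T

/-- An increasing (I,J)-forest: a cyclic (I,J)-forest all of whose arcs are increasing
or minimal. -/
def IncForest (w : List Bool) (F : Set (ℕ × ℕ)) : Prop :=
  CycForest w F ∧ ∀ p ∈ F, p.1 ≤ p.2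

/-- An increasing (I,J)-tree: a maximal increasing (I,J)-forest. -/
def IncTree (w : List Bool) (T : Set (ℕ × ℕ)) : Prop :=
  IncForest w T ∧ ∀ T', IncForest w T' → T ⊆ T' → T' = T

/-- Two edges `(a,b)` and `(c,d)` with `a < b`, `c < d` cross if `a < c < b < d` or
`c < a < d < b`. -/
def CrossE (p q : ℕ × ℕ) : Prop :=
  (p.1 < q.1 ∧ q.1 < p.2 ∧ p.2 < q.2) ∨ (q.1 < p.1 ∧ p.1 < q.2 ∧ q.2 < p.2)

/-- A graph on `I ∪ J` whose edges `(i,j)` satisfy `i ∈ I`, `j ∈ J`, `i < j`, which is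
alternating (every vertex is a source or a sink) and non-crossing. -/
def AltNC (w : List Bool) (H : Set (ℕ × ℕ)) : Prop :=
  (∀ p ∈ H, p.1 ∈ Iset w ∧ p.2 ∈ Jset w ∧ p.1 < p.2) ∧
  (∀ v : ℕ, (∀ p ∈ H, p.2 ≠ v) ∨ (∀ p ∈ H, p.1 ≠ v)) ∧
  (∀ p ∈ H, ∀ q ∈ H, p ≠ q → ¬ CrossE p q)

/-- The set `D_ν̄`: maximal alternating non-crossing graphs. -/
def Dnu (w : List Bool) (H : Set (ℕ × ℕ)) : Prop :=
  AltNC w H ∧ ∀ H', AltNC w H' → H ⊆ H' → H' = H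

/-- A maximal arc: `(1,n)`, or an arc `(i,j)` with `j < i` and no index strictly
between `j` and `i`. -/
def MaxArc (w : List Bool) (p : ℕ × ℕ) : Prop :=
  (p.1 = 1 ∧ p.2 = nIdx w) ∨
  (p.2 < p.1 ∧ ∀ k ∈ Iset w ∪ Jset w, ¬ (p.2 < k ∧ k < p.1))

/-! ### Cyclic peaks and rotations -/

/-- The positions `r` of the (non-wrap-around) cyclic peaks: `N` at `r` and `E` at `r+1`. -/
def peakPositions (w : List Bool) : List ℕ :=
  (List.range w.length).filter fun r => !letterAt w r && letterAt w (r + 1)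

/-- The position of the `E` step of the `l`-th cyclic peak (`1 ≤ l ≤ w`); the `w`-th
cyclic peak is the wrap-around peak, whose `E` step is at position `0`. -/
def shiftPos (w : List Bool) (l : ℕ) : ℕ :=
  if l = numVal w then 0 else (peakPositions w).getD (l - 1) 0 + 1

/-- The word `ν̄(l)` obtained by cyclically shifting `w = ν̄` to start at the `E` step of
the `l`-th cyclic peak. -/
def rotWord (w : List Bool) (l : ℕ) : List Bool :=
  w.drop (shiftPos w l) ++ w.take (shiftPos w l)

/-- The effect of the rotation on positions. -/
def rotPos (w : List Bool) (l : ℕ) (p : ℕ) : ℕ :=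
  (p + w.length - shiftPos w l) % w.length

/-- The position of the `E` step with index `i`. -/
def Epos (w : List Bool) (i : ℕ) : ℕ :=
  (((List.range w.length).filter fun p => letterAt w p && decide (idxAt w p = i))).headD 0

/-- The position of the `N` step with index `j`. -/
def Npos (w : List Bool) (j : ℕ) : ℕ :=
  (((List.range w.length).filter fun p => !letterAt w p && decide (idxAt w p = j))).headD 0

/-- The map induced on arcs by the cyclic rotation taking `ν̄` to `ν̄(l)`. -/
def arcMap (w : List Bool) (l : ℕ) (p : ℕ × ℕ) : ℕ × ℕ :=
  (idxAt (rotWord w l) (rotPos w l (Epos w p.1)),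
   idxAt (rotWord w l) (rotPos w l (Npos w p.2)))

/-- The arc determined by the `l`-th cyclic peak. -/
def peakArc (w : List Bool) (l : ℕ) : ℕ × ℕ :=
  if l = numVal w then (1, nIdx w)
  else (idxAt w ((peakPositions w).getD (l - 1) 0 + 1), idxAt w ((peakPositions w).getD (l - 1) 0))

end FP

/-!
Route vectors are flows (the netflow of a route telescopes along it), and flows form a convex
set. Conversely, a flow `x` is carried by some route `R` that traverses every edge in the
direction of the sign of `x`: following such edges from the source, conservation never lets
the walk stop before the sink and acyclicity never lets it revisit a vertex. Let `λ` be the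
smallest amount of flow along `R`. If `λ ≥ 1`, then `x - R.vec` is a circulation with the
signs of `x`, hence zero in an acyclic graph. Otherwise `x = λ • R.vec + (1 - λ) • y` for a flow
`y` whose support misses an edge of `R`, and induction on the size of the support finishes.
-/

theorem List.sum_map_sub_eq_of_isChain {α γ β : Type*} [AddCommGroup β] (a b : α → γ)
    (φ : γ → β) : ∀ {l : List α} (hl : l ≠ []), l.IsChain (fun s t => b s = a t) →
      (l.map fun s => φ (a s) - φ (b s)).sum = φ (a (l.head hl)) - φ (b (l.getLast hl))
  | [s], _, _ => by simp
  | s :: t :: l, _, hc => by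
    rw [List.isChain_cons_cons] at hc
    rw [List.map_cons, List.sum_cons,
      List.sum_map_sub_eq_of_isChain a b φ (List.cons_ne_nil t l) hc.2,
      List.getLast_cons (List.cons_ne_nil t l), List.head_cons, List.head_cons, hc.1]
    abel

namespace FP

def stepSign {α : Type*} (s : α × Bool) : ℝ := if s.2 then 1 else -1

section Conforms

variable {ι : Type*}

def Conforms (y x : ι → ℝ) : Prop := ∀ e, (0 ≤ x e → 0 ≤ y e) ∧ (x e ≤ 0 → y e ≤ 0)

variable {x y : ι → ℝ}

theorem Conforms.eq_zero (h : Conforms y x) {e : ι} (he : x e = 0) : y e = 0 :=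
  le_antisymm ((h e).2 he.le) ((h e).1 he.ge)

theorem Conforms.smul (h : Conforms y x) {c : ℝ} (hc : 0 ≤ c) : Conforms (c • y) x := fun e =>
  ⟨fun he => mul_nonneg hc ((h e).1 he), fun he => mul_nonpos_of_nonneg_of_nonpos hc ((h e).2 he)⟩

end Conforms

namespace LGraph

variable {G : LGraph}

variable (G) in
def demand (v : ℕ) : ℝ := (if v = G.src then 1 else 0) - (if v = G.snk then 1 else 0)

variable (G) in
def SignFeasible (x : Fin G.m → ℝ) : Prop :=
  ∀ e, (G.etype e = .forward → 0 ≤ x e) ∧ (G.etype e = .backward → x e ≤ 0)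

theorem mem_flowSet {x : Fin G.m → ℝ} :
    x ∈ G.flowSet ↔ (∀ v, G.netflow x v = G.demand v) ∧ G.SignFeasible x :=
  Iff.rfl

theorem SignFeasible.of_conforms {x y : Fin G.m → ℝ} (hx : G.SignFeasible x) (h : Conforms y x) :
    G.SignFeasible y := fun e =>
  ⟨fun he => (h e).1 ((hx e).1 he), fun he => (h e).2 ((hx e).2 he)⟩

theorem netflow_eq_sum_mul (x : Fin G.m → ℝ) (v : ℕ) :
    G.netflow x v =
      ∑ e, x e * ((if G.tail e = v then 1 else 0) - (if G.head e = v then 1 else 0)) := by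
  unfold netflow
  congr! 1 with e
  split_ifs <;> ring

theorem netflow_add (x y : Fin G.m → ℝ) (v : ℕ) :
    G.netflow (x + y) v = G.netflow x v + G.netflow y v := by
  simp only [netflow_eq_sum_mul, Pi.add_apply, add_mul, Finset.sum_add_distrib]

theorem netflow_sub (x y : Fin G.m → ℝ) (v : ℕ) :
    G.netflow (x - y) v = G.netflow x v - G.netflow y v := by
  simp only [netflow_eq_sum_mul, Pi.sub_apply, sub_mul, Finset.sum_sub_distrib]

theorem netflow_smul (c : ℝ) (x : Fin G.m → ℝ) (v : ℕ) :
    G.netflow (c • x) v = c * G.netflow x v := by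
  simp only [netflow_eq_sum_mul, Pi.smul_apply, smul_eq_mul, mul_assoc, Finset.mul_sum]

theorem netflow_eq_sum_steps (x : Fin G.m → ℝ) (v : ℕ) :
    G.netflow x v = ∑ s : Fin G.m × Bool, if G.sv s = v then stepSign s * x s.1 else 0 := by
  rw [netflow, Fintype.sum_prod_type]
  refine Finset.sum_congr rfl fun e _ => ?_
  simp only [Fintype.sum_bool, sv, stepSign, if_true, Bool.false_eq_true, if_false]
  split_ifs <;> ring

theorem netflow_sum {ι : Type*} (t : Finset ι) (f : ι → Fin G.m → ℝ) (v : ℕ) :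
    G.netflow (∑ i ∈ t, f i) v = ∑ i ∈ t, G.netflow (f i) v := by
  simp only [netflow_eq_sum_mul, Finset.sum_apply, Finset.sum_mul]
  exact Finset.sum_comm

theorem netflow_single_step (s : Fin G.m × Bool) (v : ℕ) :
    G.netflow (Pi.single s.1 (stepSign s)) v =
      (if G.sv s = v then 1 else 0) - (if G.ev s = v then 1 else 0) := by
  simp only [netflow_eq_sum_mul, Pi.single_apply, ite_mul, zero_mul, Finset.sum_ite_eq',
    Finset.mem_univ, if_true]
  obtain ⟨e, _ | _⟩ := s <;> simp [stepSign, sv, ev]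

theorem convex_flowSet : Convex ℝ G.flowSet := by
  intro x hx y hy a b ha hb hab
  refine ⟨fun v => ?_, fun e => ?_⟩
  · rw [netflow_add, netflow_smul, netflow_smul, hx.1, hy.1, ← add_mul, hab, one_mul]
  · simp only [Pi.add_apply, Pi.smul_apply, smul_eq_mul]
    exact ⟨fun h => add_nonneg (mul_nonneg ha ((hx.2 e).1 h)) (mul_nonneg hb ((hy.2 e).1 h)),
      fun h => add_nonpos (mul_nonpos_of_nonneg_of_nonpos ha ((hx.2 e).2 h))
        (mul_nonpos_of_nonneg_of_nonpos hb ((hy.2 e).2 h))⟩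

variable (G) in
def CanTraverse (s : Fin G.m × Bool) : Prop :=
  (s.2 = true → G.etype s.1 ≠ .backward) ∧ (s.2 = false → G.etype s.1 ≠ .forward)

def Carries (x : Fin G.m → ℝ) (s : Fin G.m × Bool) : Prop := 0 < stepSign s * x s.1

theorem dStep_of_canTraverse {s : Fin G.m × Bool} (h : G.CanTraverse s) :
    G.DStep (G.sv s) (G.ev s) := by
  obtain ⟨e, _ | _⟩ := s
  · exact ⟨e, .inr ⟨rfl, rfl, h.2 rfl⟩⟩
  · exact ⟨e, .inl ⟨rfl, rfl, h.1 rfl⟩⟩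

theorem SignFeasible.canTraverse {x : Fin G.m → ℝ} (hx : G.SignFeasible x)
    {s : Fin G.m × Bool} (hs : Carries x s) : G.CanTraverse s := by
  obtain ⟨e, _ | _⟩ := s
  · have : x e < 0 := by simpa [Carries, stepSign] using hs
    exact ⟨nofun, fun _ he => by linarith [(hx e).1 he]⟩
  · have : 0 < x e := by simpa [Carries, stepSign] using hs
    exact ⟨fun _ he => by linarith [(hx e).2 he], nofun⟩

theorem exists_carries_of_ne_zero {x : Fin G.m → ℝ} {e : Fin G.m} (he : x e ≠ 0) :
    ∃ b, Carries x (e, b) := by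
  rcases he.lt_or_gt with h | h
  · exact ⟨false, by simp [Carries, stepSign, h]⟩
  · exact ⟨true, by simp [Carries, stepSign, h]⟩

theorem Carries.fst_injective {x : Fin G.m → ℝ} {s t : Fin G.m × Bool} (hs : Carries x s)
    (ht : Carries x t) (h : s.1 = t.1) : s = t := by
  obtain ⟨e, b⟩ := s
  obtain ⟨e', b'⟩ := t
  obtain rfl : e = e' := h
  cases b <;> cases b' <;> simp_all [Carries, stepSign] <;> linarith

/-- If nothing leaves `v`, the netflow at `v` is nonpositive, and negative as soon as
something enters `v`. -/
theorem exists_carries_from {x : Fin G.m → ℝ} {v : ℕ} (hnet : 0 ≤ G.netflow x v)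
    (hin : 0 < G.netflow x v ∨ ∃ s, Carries x s ∧ G.ev s = v) :
    ∃ s, Carries x s ∧ G.sv s = v := by
  by_contra! hout
  have hterm : ∀ s : Fin G.m × Bool, (if G.sv s = v then stepSign s * x s.1 else 0) ≤ 0 := by
    intro s
    split_ifs with hs
    · exact not_lt.mp fun h => hout s h hs
    · exact le_rfl
  rcases hin with hpos | ⟨s, hs, hsv⟩
  · have := Finset.sum_nonpos (s := Finset.univ) fun s _ => hterm s
    rw [← netflow_eq_sum_steps] at this
    linarith
  · have hrev : (if G.sv (s.1, !s.2) = v then stepSign (s.1, !s.2) * x s.1 else 0) < 0 := by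
      obtain ⟨e, _ | _⟩ := s <;> simp_all [Carries, stepSign, sv, ev]
    have := Finset.sum_lt_sum (s := Finset.univ) (fun s _ => hterm s) ⟨_, Finset.mem_univ _, hrev⟩
    rw [← netflow_eq_sum_steps, Finset.sum_const_zero] at this
    linarith

theorem DStep.mem_endpoints {a b : ℕ} (h : G.DStep a b) :
    b ∈ Set.range G.tail ∪ Set.range G.head := by
  obtain ⟨e, ⟨-, rfl, -⟩ | ⟨-, rfl, -⟩⟩ := h
  exacts [.inr ⟨e, rfl⟩, .inl ⟨e, rfl⟩]

/-- A directed walk visits only finitely many vertices, so an infinite one would repeat a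
vertex and close a cycle. -/
theorem Acyclic.wellFounded (hacyc : G.Acyclic) : WellFounded (flip G.DStep) := by
  refine wellFounded_iff_isEmpty_descending_chain.mpr ⟨fun ⟨f, hf⟩ => ?_⟩
  obtain ⟨a, b, hab, heq⟩ := Set.Finite.exists_lt_map_eq_of_forall_mem
    (f := fun k => f (k + 1)) (fun k => (hf k).mem_endpoints)
    ((Set.finite_range _).union (Set.finite_range _))
  have := Nat.rel_of_forall_rel_succ_of_lt (Relation.TransGen G.DStep)
    (f := fun k => f (k + 1)) (fun k => .single (hf (k + 1))) hab
  exact hacyc _ (heq ▸ this)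

namespace Route

variable (R : Route G)

theorem eq_of_fst_eq {s t : Fin G.m × Bool} (hs : s ∈ R.steps) (ht : t ∈ R.steps)
    (h : s.1 = t.1) : s = t :=
  List.inj_on_of_nodup_map R.nodup hs ht h

theorem vec_fst {s : Fin G.m × Bool} (hs : s ∈ R.steps) : R.vec s.1 = stepSign s := by
  obtain ⟨e, _ | _⟩ := s
  · have : (e, true) ∉ R.steps := fun h => by simpa using R.eq_of_fst_eq h hs rfl
    simp [vec, stepSign, this, hs]
  · simp [vec, stepSign, hs]

theorem vec_eq_zero {e : Fin G.m} (he : ∀ s ∈ R.steps, s.1 ≠ e) : R.vec e = 0 := by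
  have ht := he (e, true)
  have hf := he (e, false)
  simp_all [vec]

theorem vec_eq_sum :
    R.vec = ∑ s ∈ R.steps.toFinset, Pi.single s.1 (stepSign s) := by
  funext e
  simp only [Finset.sum_apply, Pi.single_apply]
  by_cases he : ∃ s ∈ R.steps, s.1 = e
  · obtain ⟨s, hs, rfl⟩ := he
    rw [Finset.sum_eq_single_of_mem s (List.mem_toFinset.mpr hs), if_pos rfl, R.vec_fst hs]
    intro t ht hts
    rw [if_neg fun h => hts (R.eq_of_fst_eq (List.mem_toFinset.mp ht) hs h.symm)]
  · push Not at he
    rw [R.vec_eq_zero he]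
    exact (Finset.sum_eq_zero fun t ht => if_neg (he t (List.mem_toFinset.mp ht)).symm).symm

theorem netflow_vec (v : ℕ) : G.netflow R.vec v = G.demand v := by
  rw [R.vec_eq_sum, netflow_sum]
  simp only [netflow_single_step]
  rw [List.sum_toFinset _ (List.Nodup.of_map _ R.nodup),
    List.sum_map_sub_eq_of_isChain G.sv G.ev (fun w => if w = v then (1 : ℝ) else 0) R.ne R.chain,
    R.first, R.last, demand]
  simp only [eq_comm]

theorem vec_mem_flowSet : R.vec ∈ G.flowSet := by
  refine mem_flowSet.mpr ⟨R.netflow_vec, fun e => ?_⟩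
  by_cases he : ∃ s ∈ R.steps, s.1 = e
  · obtain ⟨⟨e, _ | _⟩, hs, rfl⟩ := he <;> rw [R.vec_fst hs] <;> have := R.dir _ hs
    · exact ⟨fun h => absurd h (this.2 rfl), fun _ => by norm_num [stepSign]⟩
    · exact ⟨fun _ => by norm_num [stepSign], fun h => absurd h (this.1 rfl)⟩
  · push Not at he
    simp [R.vec_eq_zero he]

end Route

variable (G) in
def routeVecs : Set (Fin G.m → ℝ) := {x | ∃ R : Route G, x = R.vec}

section Decomposition

variable {x : Fin G.m → ℝ}

/-- A flow can only enter a vertex from which it leaves again, so a nonzero circulation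
would run forever along a walk that no acyclic graph admits. -/
theorem Acyclic.eq_zero_of_netflow_eq_zero (hacyc : G.Acyclic) (hx : G.SignFeasible x)
    (hnet : ∀ v, G.netflow x v = 0) : x = 0 := by
  by_contra! hne
  obtain ⟨e, he⟩ := Function.ne_iff.mp hne
  obtain ⟨b, hb⟩ := exists_carries_of_ne_zero he
  obtain ⟨v, ⟨s, hs, rfl⟩, hmin⟩ :=
    hacyc.wellFounded.has_min {v | ∃ s, Carries x s ∧ G.ev s = v} ⟨_, _, hb, rfl⟩
  obtain ⟨t, ht, htv⟩ := exists_carries_from (hnet _).ge (.inr ⟨s, hs, rfl⟩)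
  exact hmin _ ⟨t, ht, rfl⟩ (htv ▸ dStep_of_canTraverse (hx.canTraverse ht))

/-- The reachability clause is the invariant that keeps the edges of the path distinct. -/
theorem exists_carrying_path (hacyc : G.Acyclic) (hx : x ∈ G.flowSet) (v : ℕ)
    (hv : v ≠ G.snk) (hin : v = G.src ∨ ∃ s, Carries x s ∧ G.ev s = v) :
    ∃ l : List (Fin G.m × Bool), ∃ hl : l ≠ [], l.IsChain (fun s t => G.ev s = G.sv t) ∧
      G.sv (l.head hl) = v ∧ G.ev (l.getLast hl) = G.snk ∧ (l.map Prod.fst).Nodup ∧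
      ∀ s ∈ l, Carries x s ∧ Relation.ReflTransGen G.DStep v (G.sv s) := by
  induction v using hacyc.wellFounded.induction with
  | _ v ih =>
  have hnet : G.netflow x v = if v = G.src then 1 else 0 := by
    rw [hx.1, if_neg hv, sub_zero]
  obtain ⟨s, hs, rfl⟩ : ∃ s, Carries x s ∧ G.sv s = v := by
    refine exists_carries_from (by rw [hnet]; split_ifs <;> norm_num) ?_
    rcases hin with rfl | hin
    · exact .inl (by simp [hnet])
    · exact .inr hin
  have hstep := dStep_of_canTraverse (SignFeasible.canTraverse hx.2 hs)
  by_cases hend : G.ev s = G.snk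
  · exact ⟨[s], List.cons_ne_nil _ _, List.isChain_singleton _, rfl, hend, List.nodup_singleton _,
      by simpa using ⟨hs, .refl⟩⟩
  obtain ⟨l, hl, hc, hhead, hlast, hnd, hreach⟩ := ih _ hstep hend (.inr ⟨s, hs, rfl⟩)
  refine ⟨s :: l, List.cons_ne_nil _ _, hc.cons fun t ht => ?_, rfl, ?_, ?_, ?_⟩
  · rw [List.head?_eq_some_head hl, Option.mem_some_iff] at ht
    rw [← ht, hhead]
  · rwa [List.getLast_cons hl]
  · refine List.nodup_cons.mpr ⟨fun hmem => ?_, hnd⟩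
    obtain ⟨t, ht, hts⟩ := List.mem_map.mp hmem
    obtain rfl := (hreach t ht).1.fst_injective hs hts
    exact hacyc _ (.head' hstep (hreach t ht).2)
  · simp only [List.mem_cons, forall_eq_or_imp]
    exact ⟨⟨hs, .refl⟩, fun t ht => ⟨(hreach t ht).1, .head hstep (hreach t ht).2⟩⟩

theorem exists_carrying_route (hsd : G.src ≠ G.snk) (hacyc : G.Acyclic) (hx : x ∈ G.flowSet) :
    ∃ R : Route G, ∀ s ∈ R.steps, Carries x s := by
  obtain ⟨l, hl, hc, hhead, hlast, hnd, hcarry⟩ := exists_carrying_path hacyc hx _ hsd (.inl rfl)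
  exact ⟨⟨l, hl, hc, hhead, hlast, fun s hs => SignFeasible.canTraverse hx.2 (hcarry s hs).1, hnd⟩,
    fun s hs => (hcarry s hs).1⟩

theorem Route.conforms_sub_smul_vec {R : Route G} (hR : ∀ s ∈ R.steps, Carries x s) {μ : ℝ}
    (hμ : ∀ s ∈ R.steps, μ ≤ stepSign s * x s.1) : Conforms (x - μ • R.vec) x := by
  intro e
  by_cases he : ∃ s ∈ R.steps, s.1 = e
  · obtain ⟨⟨e, _ | _⟩, hs, rfl⟩ := he <;> have h1 := hR _ hs <;> have h2 := hμ _ hs <;>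
      simp only [Carries, stepSign, Pi.sub_apply, Pi.smul_apply, smul_eq_mul, R.vec_fst hs] at * <;>
      constructor <;> intro <;> simp at * <;> linarith
  · push Not at he
    simp [R.vec_eq_zero he]

theorem Route.eq_vec_of_one_le (hacyc : G.Acyclic) (hx : x ∈ G.flowSet) {R : Route G}
    (hR : ∀ s ∈ R.steps, Carries x s) (h1 : ∀ s ∈ R.steps, 1 ≤ stepSign s * x s.1) :
    x = R.vec := by
  have hconf : Conforms (x - R.vec) x := by simpa using R.conforms_sub_smul_vec hR h1
  refine sub_eq_zero.mp (hacyc.eq_zero_of_netflow_eq_zero (SignFeasible.of_conforms hx.2 hconf)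
    fun v => ?_)
  rw [netflow_sub, (mem_flowSet.mp hx).1, R.netflow_vec, sub_self]

theorem Route.inv_smul_sub_mem_flowSet (hx : x ∈ G.flowSet) {R : Route G}
    (hR : ∀ s ∈ R.steps, Carries x s) {μ : ℝ} (hμ : ∀ s ∈ R.steps, μ ≤ stepSign s * x s.1)
    (hμ1 : μ < 1) : (1 - μ)⁻¹ • (x - μ • R.vec) ∈ G.flowSet := by
  have hconf := (R.conforms_sub_smul_vec hR hμ).smul (inv_nonneg.mpr (sub_nonneg.mpr hμ1.le))
  refine mem_flowSet.mpr ⟨fun v => ?_, SignFeasible.of_conforms hx.2 hconf⟩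
  rw [netflow_smul, netflow_sub, netflow_smul, (mem_flowSet.mp hx).1, R.netflow_vec]
  field_simp [(sub_pos.mpr hμ1).ne']

theorem flowSet_subset_convexHull (hsd : G.src ≠ G.snk) (hacyc : G.Acyclic) :
    G.flowSet ⊆ convexHull ℝ G.routeVecs := by
  classical
  intro x hx
  induction hN : (Finset.univ.filter fun e => x e ≠ 0).card using Nat.strong_induction_on
    generalizing x with
  | _ N ih =>
  obtain ⟨R, hR⟩ := exists_carrying_route hsd hacyc hx
  obtain ⟨s₀, hs₀, hmin⟩ := R.steps.toFinset.exists_min_image (fun s => stepSign s * x s.1)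
    (List.toFinset_nonempty_iff _ |>.mpr R.ne)
  rw [List.mem_toFinset] at hs₀
  simp only [List.mem_toFinset] at hmin
  set lam := stepSign s₀ * x s₀.1
  have hlam : 0 < lam := hR s₀ hs₀
  rcases le_or_gt 1 lam with hle | hlt
  · exact subset_convexHull ℝ G.routeVecs
      ⟨R, R.eq_vec_of_one_le hacyc hx hR fun s hs => hle.trans (hmin s hs)⟩
  set y := (1 - lam)⁻¹ • (x - lam • R.vec)
  have hconf : Conforms y x :=
    (R.conforms_sub_smul_vec hR hmin).smul (inv_nonneg.mpr (by linarith))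
  have hys₀ : y s₀.1 = 0 := by
    obtain ⟨e, _ | _⟩ := s₀ <;> simp [y, lam, R.vec_fst hs₀, stepSign]
  have hsupp : (Finset.univ.filter fun e => y e ≠ 0).card < N := by
    refine hN ▸ Finset.card_lt_card ((Finset.ssubset_iff_of_subset fun e => ?_).mpr ⟨s₀.1, ?_⟩)
    · simpa using mt hconf.eq_zero
    · simpa [hys₀] using fun h => hlam.ne' (by simp [lam, h])
  have hxy : x = lam • R.vec + (1 - lam) • y := by
    simp only [y, smul_smul, mul_inv_cancel₀ (by linarith : 1 - lam ≠ 0), one_smul]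
    abel
  rw [hxy]
  exact convex_convexHull ℝ _ (subset_convexHull ℝ G.routeVecs ⟨R, rfl⟩)
    (ih _ hsupp (R.inv_smul_sub_mem_flowSet hx hR hmin hlt) rfl) hlam.le (by linarith) (by ring)

end Decomposition

end LGraph

end FP

open FP in
theorem stmt1_general (n : ℕ) (hn : 2 ≤ n) (G : LGraph) (hsrc : G.src = 1) (hsnk : G.snk = n)
    (hacyc : G.Acyclic) :
    G.flowSet = convexHull ℝ { x | ∃ R : LGraph.Route G, x = R.vec } := by
  have hsd : G.src ≠ G.snk := by omega
  refine (LGraph.flowSet_subset_convexHull hsd hacyc).antisymm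
    (convexHull_min ?_ LGraph.convex_flowSet)
  rintro _ ⟨R, rfl⟩
  exact R.vec_mem_flowSet

open FP in
/-- If `G` is acyclic, then `F_G` is the convex hull of the signed
characteristic vectors of the routes of `G`. -/
theorem stmt1 (n : ℕ) (hn : 2 ≤ n) (G : LGraph) (hsrc : G.src = 1) (hsnk : G.snk = n)
    (hwf : G.WF n) (hconn : G.Connected n) (hacyc : G.Acyclic)
    (hroutes : ∀ e : Fin G.m, ∃ (R : LGraph.Route G) (c : Bool), (e, c) ∈ R.steps)
    (hends : ∀ e : Fin G.m,
      (G.tail e = 1 ∨ G.head e = 1 ∨ G.tail e = n ∨ G.head e = n) → G.etype e = .forward) :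
    G.flowSet = convexHull ℝ { x | ∃ R : LGraph.Route G, x = R.vec } :=
  stmt1_general n hn G hsrc hsnk hacyc
end

section
/- If G is an acyclic directed graph (with forward, backward, and bidirectional edges permitted), then there exists an acyclic directed graph G* all of whose edges are forward edges such that the flow polytope F_G is integrally equivalent to the flow polytope F_{G*}. -/
/-!
An acyclic graph has no bidirectional edges, since such an edge is a directed 2-cycle.
Relabel the vertices along a topological order `σ`, turn every backward edge around and negate
its flow coordinate: all edges become forward and flow conservation is untouched. As `σ` need
not put the source first and the sink last, attach a new source `1` and a new sink `N` through
edges `(1, σ src)` and `(σ snk, N)`; conservation at `1` and `N` forces flow `1` on both. The map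
`x ↦ (±x, 1, 1)` is then an injective affine bijection of the flow polytopes that preserves
integrality in both directions, hence an integral equivalence.
-/

namespace FP

theorem intEquiv_of_injective {α β : Type*} {P : Set (α → ℝ)} {Q : Set (β → ℝ)}
    (φ : (α → ℝ) →ᵃ[ℝ] (β → ℝ)) (hφ : Function.Injective φ) (himage : φ '' P = Q)
    (hlat : ∀ x, IsLatticePt (φ x) ↔ IsLatticePt x) : IntEquiv P Q := by
  have hspan : (affineSpan ℝ Q : Set (β → ℝ)) = φ '' affineSpan ℝ P := by
    rw [← himage, ← AffineSubspace.map_span, AffineSubspace.coe_map]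
  refine ⟨φ, himage ▸ hφ.injOn.bijOn_image, ?_⟩
  rw [hspan]
  refine ⟨fun x hx => ⟨(hlat x).2 hx.1, Set.mem_image_of_mem _ hx.2⟩, hφ.injOn, ?_⟩
  rintro _ ⟨hy, x, hx, rfl⟩
  exact ⟨x, ⟨(hlat x).1 hy, hx⟩, rfl⟩

namespace LGraph

variable {G : LGraph} {n : ℕ}

theorem wf_iff : G.WF n ↔ ∀ e : Fin G.m, 1 ≤ G.tail e ∧ G.tail e < G.head e ∧ G.head e ≤ n := by
  simp only [WF, List.mem_iff_get, forall_exists_index, forall_apply_eq_imp_iff]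
  rfl

theorem WF.dStep_mem (hwf : G.WF n) {a b : ℕ} (h : G.DStep a b) :
    a ∈ Set.Icc 1 n ∧ b ∈ Set.Icc 1 n := by
  obtain ⟨e, ⟨rfl, rfl, -⟩ | ⟨rfl, rfl, -⟩⟩ := h <;>
  · have := wf_iff.1 hwf e
    simp only [Set.mem_Icc]
    omega

theorem WF.netflow_eq_zero (hwf : G.WF n) (x : Fin G.m → ℝ) {v : ℕ} (hv : v ∉ Set.Icc 1 n) :
    G.netflow x v = 0 := by
  refine Finset.sum_eq_zero fun e _ => ?_
  have := wf_iff.1 hwf e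
  simp only [Set.mem_Icc] at hv
  rw [if_neg (by omega), if_neg (by omega), sub_zero]

theorem Acyclic.etype_ne_bidirectional (hacyc : G.Acyclic) (e : Fin G.m) :
    G.etype e ≠ .bidirectional := fun hb =>
  hacyc (G.tail e) <|
    .head ⟨e, .inl ⟨rfl, rfl, by simp [hb]⟩⟩ (.single ⟨e, .inr ⟨rfl, rfl, by simp [hb]⟩⟩)

theorem acyclic_of_forall_forward (hwf : G.WF n) (hfwd : ∀ e, G.etype e = .forward) :
    G.Acyclic := by
  have hlt : ∀ a b, G.DStep a b → a < b := by
    rintro a b ⟨e, ⟨rfl, rfl, -⟩ | ⟨-, -, hne⟩⟩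
    · exact (wf_iff.1 hwf e).2.1
    · exact absurd (hfwd e) hne
  intro v hv
  have : Relation.TransGen (· < · : ℕ → ℕ → Prop) v v := Relation.TransGen.lift id hlt v v hv
  rw [Relation.transGen_eq_self] at this
  exact lt_irrefl v this

section Labelling

open scoped Classical in
variable (G n) in
noncomputable def rank (v : ℕ) : ℕ :=
  ((Finset.Icc 1 n).filter fun u => Relation.TransGen G.DStep u v).card

theorem rank_le (v : ℕ) : G.rank n v ≤ n := by
  classical
  exact (Finset.card_filter_le _ _).trans (by simp)

theorem rank_lt_rank (hwf : G.WF n) (hacyc : G.Acyclic) {a b : ℕ} (h : G.DStep a b) :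
    G.rank n a < G.rank n b := by
  classical
  refine Finset.card_lt_card ⟨fun u hu => ?_, fun hsub => ?_⟩
  · simp only [Finset.mem_filter] at hu ⊢
    exact ⟨hu.1, hu.2.tail h⟩
  · have ha : a ∈ (Finset.Icc 1 n).filter fun u => Relation.TransGen G.DStep u b := by
      simpa using ⟨(hwf.dStep_mem h).1, .single h⟩
    exact hacyc a (Finset.mem_filter.1 (hsub ha)).2

variable (G n) in
noncomputable def topLabel (v : ℕ) : ℕ := G.rank n v * (n + 1) + v + 1

theorem topLabel_lt_topLabel (hwf : G.WF n) (hacyc : G.Acyclic) {a b : ℕ} (h : G.DStep a b) :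
    G.topLabel n a < G.topLabel n b := by
  have hrank := rank_lt_rank hwf hacyc h
  have ha := (hwf.dStep_mem h).1.2
  have : (G.rank n a + 1) * (n + 1) ≤ G.rank n b * (n + 1) := Nat.mul_le_mul_right _ hrank
  unfold topLabel
  nlinarith

theorem topLabel_injOn : Set.InjOn (G.topLabel n) (Set.Icc 1 n) := by
  intro u hu v hv h
  have h' : u + G.rank n u * (n + 1) = v + G.rank n v * (n + 1) := by
    unfold topLabel at h
    omega
  have := congrArg (· % (n + 1)) h'
  simp only [Nat.add_mul_mod_self_right] at this
  rwa [Nat.mod_eq_of_lt (by grind), Nat.mod_eq_of_lt (by grind)] at this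

theorem topLabel_mem {v : ℕ} (hv : v ∈ Set.Icc 1 n) :
    1 < G.topLabel n v ∧ G.topLabel n v < (n + 1) * (n + 1) + 1 := by
  have := Nat.mul_le_mul_right (n + 1) (G.rank_le (n := n) v)
  unfold topLabel
  constructor <;> nlinarith [hv.1, hv.2]

end Labelling

section ForwardGraph

variable (σ : ℕ → ℕ) (N : ℕ)

def orientEdge (p : GEdge) : GEdge :=
  if p.2.2 = .backward then (σ p.2.1, σ p.1, .forward) else (σ p.1, σ p.2.1, .forward)

variable (G)

def forwardEdge (k : Fin (G.m + 2)) : GEdge :=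
  if h : (k : ℕ) < G.m then orientEdge σ (G.edges.get ⟨k, h⟩)
  else if (k : ℕ) = G.m then (1, σ G.src, .forward)
  else (σ G.snk, N, .forward)

def forwardGraph : LGraph := ⟨List.ofFn (G.forwardEdge σ N), 1, N⟩

theorem m_forwardGraph : (G.forwardGraph σ N).m = G.m + 2 := List.length_ofFn

def oldEdge (e : Fin G.m) : Fin (G.forwardGraph σ N).m :=
  ⟨e, by rw [m_forwardGraph]; omega⟩

def srcEdge : Fin (G.forwardGraph σ N).m := ⟨G.m, by rw [m_forwardGraph]; omega⟩

def snkEdge : Fin (G.forwardGraph σ N).m := ⟨G.m + 1, by rw [m_forwardGraph]; omega⟩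

variable {G σ N}

theorem forall_edge_forwardGraph {P : Fin (G.forwardGraph σ N).m → Prop} :
    (∀ k, P k) ↔ (∀ e, P (G.oldEdge σ N e)) ∧ P (G.srcEdge σ N) ∧ P (G.snkEdge σ N) := by
  refine ⟨fun h => ⟨fun e => h _, h _, h _⟩, fun ⟨hold, hsrc, hsnk⟩ k => ?_⟩
  obtain ⟨k, hk⟩ := k
  rw [m_forwardGraph] at hk
  rcases Nat.lt_or_ge k G.m with h | h
  · exact hold ⟨k, h⟩
  · obtain rfl | rfl : k = G.m ∨ k = G.m + 1 := by omega
    exacts [hsrc, hsnk]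

theorem sum_forwardGraph (F : Fin (G.forwardGraph σ N).m → ℝ) :
    ∑ k, F k = ∑ e, F (G.oldEdge σ N e) + F (G.srcEdge σ N) + F (G.snkEdge σ N) := by
  rw [← Fin.sum_congr' F (m_forwardGraph G σ N).symm, Fin.sum_univ_castSucc,
    Fin.sum_univ_castSucc]
  rfl

theorem get_forwardGraph (k : Fin (G.forwardGraph σ N).m) :
    (G.forwardGraph σ N).edges.get k = G.forwardEdge σ N (Fin.cast (m_forwardGraph G σ N) k) :=
  List.get_ofFn _ k

theorem get_oldEdge (e : Fin G.m) :
    (G.forwardGraph σ N).edges.get (G.oldEdge σ N e) = orientEdge σ (G.edges.get e) := by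
  simp only [oldEdge, get_forwardGraph, forwardEdge, Fin.cast_mk, Fin.is_lt, ↓reduceDIte]
  rfl

theorem tail_oldEdge (e : Fin G.m) : (G.forwardGraph σ N).tail (G.oldEdge σ N e) =
    if G.etype e = .backward then σ (G.head e) else σ (G.tail e) := by
  unfold tail head etype
  rw [get_oldEdge, orientEdge]
  split_ifs <;> rfl

theorem head_oldEdge (e : Fin G.m) : (G.forwardGraph σ N).head (G.oldEdge σ N e) =
    if G.etype e = .backward then σ (G.tail e) else σ (G.head e) := by
  unfold tail head etype
  rw [get_oldEdge, orientEdge]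
  split_ifs <;> rfl

theorem get_srcEdge :
    (G.forwardGraph σ N).edges.get (G.srcEdge σ N) = (1, σ G.src, .forward) := by
  simp [get_forwardGraph, forwardEdge, srcEdge]

theorem get_snkEdge :
    (G.forwardGraph σ N).edges.get (G.snkEdge σ N) = (σ G.snk, N, .forward) := by
  simp [get_forwardGraph, forwardEdge, snkEdge]

theorem etype_forwardGraph (k : Fin (G.forwardGraph σ N).m) :
    (G.forwardGraph σ N).etype k = .forward := by
  revert k
  refine forall_edge_forwardGraph.2 ⟨fun e => ?_, ?_, ?_⟩
  · rw [etype, get_oldEdge, orientEdge]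
    split_ifs <;> rfl
  · rw [etype, get_srcEdge]
  · rw [etype, get_snkEdge]

end ForwardGraph

section EdgeSign

variable (G) in
noncomputable def edgeSign (e : Fin G.m) : ℝ := if G.etype e = .backward then -1 else 1

theorem edgeSign_mul_self (e : Fin G.m) : G.edgeSign e * G.edgeSign e = 1 := by
  unfold edgeSign
  split_ifs <;> norm_num

theorem edgeSign_ne_zero (e : Fin G.m) : G.edgeSign e ≠ 0 :=
  left_ne_zero_of_mul_eq_one (edgeSign_mul_self e)

theorem zero_le_edgeSign_mul_iff {e : Fin G.m} (he : G.etype e ≠ .bidirectional) (t : ℝ) :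
    0 ≤ G.edgeSign e * t ↔ (G.etype e = .forward → 0 ≤ t) ∧ (G.etype e = .backward → t ≤ 0) := by
  unfold edgeSign
  cases h : G.etype e <;> simp_all

theorem isInt_edgeSign_mul_iff (e : Fin G.m) (t : ℝ) :
    (∃ z : ℤ, G.edgeSign e * t = z) ↔ ∃ z : ℤ, t = z := by
  unfold edgeSign
  split_ifs
  · constructor <;> rintro ⟨z, hz⟩ <;> exact ⟨-z, by push_cast; linarith⟩
  · simp

end EdgeSign

variable {σ : ℕ → ℕ} {N : ℕ}

variable (G σ N) in
noncomputable def flowMap : (Fin G.m → ℝ) →ᵃ[ℝ] (Fin (G.forwardGraph σ N).m → ℝ) :=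
  AffineMap.pi fun k =>
    if h : (k : ℕ) < G.m then
      (G.edgeSign ⟨k, h⟩ • LinearMap.proj (R := ℝ) (φ := fun _ : Fin G.m => ℝ) ⟨k, h⟩).toAffineMap
    else AffineMap.const ℝ _ 1

theorem flowMap_oldEdge (x : Fin G.m → ℝ) (e : Fin G.m) :
    G.flowMap σ N x (G.oldEdge σ N e) = G.edgeSign e * x e := by
  simp [flowMap, oldEdge]

theorem flowMap_srcEdge (x : Fin G.m → ℝ) : G.flowMap σ N x (G.srcEdge σ N) = 1 := by
  simp [flowMap, srcEdge]

theorem flowMap_snkEdge (x : Fin G.m → ℝ) : G.flowMap σ N x (G.snkEdge σ N) = 1 := by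
  simp [flowMap, snkEdge]

theorem flowMap_injective : Function.Injective (G.flowMap σ N) := fun x x' h =>
  funext fun e => mul_left_cancel₀ (edgeSign_ne_zero e) <| by
    simpa only [flowMap_oldEdge] using congrFun h (G.oldEdge σ N e)

theorem isLatticePt_flowMap_iff (x : Fin G.m → ℝ) :
    IsLatticePt (G.flowMap σ N x) ↔ IsLatticePt x := by
  have hone : ∃ z : ℤ, (1 : ℝ) = z := ⟨1, Int.cast_one.symm⟩
  simp only [IsLatticePt, forall_edge_forwardGraph, flowMap_oldEdge, flowMap_srcEdge,
    flowMap_snkEdge, hone, and_true, isInt_edgeSign_mul_iff]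

theorem netflow_forwardGraph (y : Fin (G.forwardGraph σ N).m → ℝ) (w : ℕ) :
    (G.forwardGraph σ N).netflow y w =
      ∑ e, ((if (G.forwardGraph σ N).tail (G.oldEdge σ N e) = w then y (G.oldEdge σ N e) else 0) -
        (if (G.forwardGraph σ N).head (G.oldEdge σ N e) = w then y (G.oldEdge σ N e) else 0)) +
      ((if 1 = w then y (G.srcEdge σ N) else 0) -
        (if σ G.src = w then y (G.srcEdge σ N) else 0)) +
      ((if σ G.snk = w then y (G.snkEdge σ N) else 0) -
        (if N = w then y (G.snkEdge σ N) else 0)) := by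
  rw [netflow, sum_forwardGraph]
  simp only [tail, head, get_srcEdge, get_snkEdge]

theorem netflow_flowMap (x : Fin G.m → ℝ) (w : ℕ) :
    (G.forwardGraph σ N).netflow (G.flowMap σ N x) w =
      ∑ e, ((if σ (G.tail e) = w then x e else 0) - (if σ (G.head e) = w then x e else 0)) +
      ((if 1 = w then 1 else 0) - (if σ G.src = w then 1 else 0)) +
      ((if σ G.snk = w then 1 else 0) - (if N = w then 1 else 0)) := by
  rw [netflow_forwardGraph, flowMap_srcEdge, flowMap_snkEdge]
  congr 2
  refine Finset.sum_congr rfl fun e _ => ?_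
  rw [tail_oldEdge, head_oldEdge, flowMap_oldEdge, edgeSign]
  split_ifs <;> ring

theorem oldEdge_endpoints_mem (hwf : G.WF n) (hrange : ∀ v ∈ Set.Icc 1 n, 1 < σ v ∧ σ v < N)
    (e : Fin G.m) :
    (G.forwardGraph σ N).tail (G.oldEdge σ N e) ∈ Set.Ioo 1 N ∧
      (G.forwardGraph σ N).head (G.oldEdge σ N e) ∈ Set.Ioo 1 N := by
  have he := wf_iff.1 hwf e
  have htail := hrange (G.tail e) ⟨he.1, by omega⟩
  have hhead := hrange (G.head e) ⟨by omega, he.2.2⟩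
  rw [tail_oldEdge, head_oldEdge]
  split_ifs <;> exact ⟨‹_›, ‹_›⟩

theorem tail_lt_head_oldEdge (hmono : ∀ ⦃a b⦄, G.DStep a b → σ a < σ b) (e : Fin G.m) :
    (G.forwardGraph σ N).tail (G.oldEdge σ N e) <
      (G.forwardGraph σ N).head (G.oldEdge σ N e) := by
  rw [tail_oldEdge, head_oldEdge]
  split_ifs with h
  · exact hmono ⟨e, .inr ⟨rfl, rfl, by simp [h]⟩⟩
  · exact hmono ⟨e, .inl ⟨rfl, rfl, h⟩⟩

theorem wf_forwardGraph (hwf : G.WF n) (hmono : ∀ ⦃a b⦄, G.DStep a b → σ a < σ b)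
    (hrange : ∀ v ∈ Set.Icc 1 n, 1 < σ v ∧ σ v < N) (hs : G.src ∈ Set.Icc 1 n)
    (ht : G.snk ∈ Set.Icc 1 n) : (G.forwardGraph σ N).WF N := by
  rw [wf_iff, forall_edge_forwardGraph]
  have := hrange _ hs
  have := hrange _ ht
  refine ⟨fun e => ?_, ?_, ?_⟩
  · have := oldEdge_endpoints_mem hwf hrange e
    have := tail_lt_head_oldEdge (N := N) hmono e
    simp only [Set.mem_Ioo] at *
    omega
  · simp only [tail, head, get_srcEdge]
    omega
  · simp only [tail, head, get_snkEdge]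
    omega

theorem flowSet_forwardGraph_saturated (hwf : G.WF n)
    (hrange : ∀ v ∈ Set.Icc 1 n, 1 < σ v ∧ σ v < N) (hs : G.src ∈ Set.Icc 1 n)
    (ht : G.snk ∈ Set.Icc 1 n) {y : Fin (G.forwardGraph σ N).m → ℝ}
    (hy : y ∈ (G.forwardGraph σ N).flowSet) :
    y (G.srcEdge σ N) = 1 ∧ y (G.snkEdge σ N) = 1 := by
  have hσs := hrange _ hs
  have hσt := hrange _ ht
  have hold : ∀ w, w = 1 ∨ w = N → ∀ e,
      (if (G.forwardGraph σ N).tail (G.oldEdge σ N e) = w then y (G.oldEdge σ N e) else 0) -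
        (if (G.forwardGraph σ N).head (G.oldEdge σ N e) = w then y (G.oldEdge σ N e) else 0) =
        0 := by
    intro w hw e
    have := oldEdge_endpoints_mem hwf hrange e
    simp only [Set.mem_Ioo] at this
    rw [if_neg (by omega), if_neg (by omega), sub_zero]
  have h1 := hy.1 1
  have hN := hy.1 N
  rw [netflow_forwardGraph, Finset.sum_eq_zero fun e _ => hold 1 (.inl rfl) e] at h1
  rw [netflow_forwardGraph, Finset.sum_eq_zero fun e _ => hold N (.inr rfl) e] at hN
  change _ = (if 1 = 1 then (1 : ℝ) else 0) - (if 1 = N then 1 else 0) at h1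
  change _ = (if N = 1 then (1 : ℝ) else 0) - (if N = N then 1 else 0) at hN
  simp only [if_neg (show σ G.src ≠ 1 by omega), if_neg (show σ G.snk ≠ 1 by omega),
    if_neg (show N ≠ 1 by omega), if_neg (show 1 ≠ N by omega),
    if_neg (show σ G.src ≠ N by omega), if_neg (show σ G.snk ≠ N by omega), if_true] at h1 hN
  constructor <;> linarith

theorem netflow_flowMap_apply_mem (hwf : G.WF n) (hinj : Set.InjOn σ (Set.Icc 1 n))
    (hrange : ∀ v ∈ Set.Icc 1 n, 1 < σ v ∧ σ v < N) (hs : G.src ∈ Set.Icc 1 n)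
    (ht : G.snk ∈ Set.Icc 1 n) (x : Fin G.m → ℝ) {v : ℕ} (hv : v ∈ Set.Icc 1 n) :
    (G.forwardGraph σ N).netflow (G.flowMap σ N x) (σ v) =
      G.netflow x v - (if v = G.src then 1 else 0) + (if v = G.snk then 1 else 0) := by
  have hσv := hrange v hv
  have hsum : ∑ e, ((if σ (G.tail e) = σ v then x e else 0) -
      (if σ (G.head e) = σ v then x e else 0)) = G.netflow x v := by
    refine Finset.sum_congr rfl fun e _ => ?_
    have he := wf_iff.1 hwf e
    simp only [hinj.eq_iff ⟨he.1, by omega⟩ hv, hinj.eq_iff ⟨by omega, he.2.2⟩ hv]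
  rw [netflow_flowMap, hsum, if_neg (show 1 ≠ σ v by omega), if_neg (show N ≠ σ v by omega)]
  simp only [hinj.eq_iff hs hv, hinj.eq_iff ht hv, @eq_comm _ G.src v, @eq_comm _ G.snk v]
  ring

theorem netflow_flowMap_apply_of_forall_ne (hwf : G.WF n) (hs : G.src ∈ Set.Icc 1 n)
    (ht : G.snk ∈ Set.Icc 1 n) (x : Fin G.m → ℝ) {w : ℕ}
    (hw : ∀ v ∈ Set.Icc 1 n, σ v ≠ w) :
    (G.forwardGraph σ N).netflow (G.flowMap σ N x) w =
      (if 1 = w then 1 else 0) - (if N = w then 1 else 0) := by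
  have hsum : ∑ e, ((if σ (G.tail e) = w then x e else 0) -
      (if σ (G.head e) = w then x e else 0)) = 0 := by
    refine Finset.sum_eq_zero fun e _ => ?_
    have he := wf_iff.1 hwf e
    rw [if_neg (hw _ ⟨he.1, by omega⟩), if_neg (hw _ ⟨by omega, he.2.2⟩), sub_zero]
  rw [netflow_flowMap, hsum, if_neg (hw _ hs), if_neg (hw _ ht)]
  ring

theorem flowMap_mem_flowSet_iff (hwf : G.WF n) (hacyc : G.Acyclic)
    (hinj : Set.InjOn σ (Set.Icc 1 n)) (hrange : ∀ v ∈ Set.Icc 1 n, 1 < σ v ∧ σ v < N)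
    (hs : G.src ∈ Set.Icc 1 n) (ht : G.snk ∈ Set.Icc 1 n) (x : Fin G.m → ℝ) :
    G.flowMap σ N x ∈ (G.forwardGraph σ N).flowSet ↔ x ∈ G.flowSet := by
  refine and_congr ⟨fun h v => ?_, fun h w => ?_⟩ ?_
  · by_cases hv : v ∈ Set.Icc 1 n
    · have hconserve := h (σ v)
      have hσv := hrange v hv
      change _ = (if σ v = 1 then (1 : ℝ) else 0) - (if σ v = N then 1 else 0) at hconserve
      rw [netflow_flowMap_apply_mem hwf hinj hrange hs ht x hv, if_neg (show σ v ≠ 1 by omega),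
        if_neg (show σ v ≠ N by omega)] at hconserve
      linarith
    · rw [hwf.netflow_eq_zero x hv, if_neg (by rintro rfl; exact hv hs),
        if_neg (by rintro rfl; exact hv ht), sub_zero]
  · change _ = (if w = 1 then (1 : ℝ) else 0) - (if w = N then 1 else 0)
    by_cases hw : ∃ v ∈ Set.Icc 1 n, σ v = w
    · obtain ⟨v, hv, rfl⟩ := hw
      have hσv := hrange v hv
      rw [netflow_flowMap_apply_mem hwf hinj hrange hs ht x hv, h v,
        if_neg (show σ v ≠ 1 by omega), if_neg (show σ v ≠ N by omega)]
      ring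
    · push Not at hw
      rw [netflow_flowMap_apply_of_forall_ne hwf hs ht x hw]
      simp only [eq_comm (a := w)]
  · simp only [etype_forwardGraph, forall_const, reduceCtorEq, false_implies, and_true]
    rw [forall_edge_forwardGraph]
    simp only [flowMap_oldEdge, flowMap_srcEdge, flowMap_snkEdge, zero_le_one, and_true]
    exact forall_congr' fun e => zero_le_edgeSign_mul_iff (hacyc.etype_ne_bidirectional e) _

theorem image_flowMap (hwf : G.WF n) (hacyc : G.Acyclic)
    (hinj : Set.InjOn σ (Set.Icc 1 n)) (hrange : ∀ v ∈ Set.Icc 1 n, 1 < σ v ∧ σ v < N)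
    (hs : G.src ∈ Set.Icc 1 n) (ht : G.snk ∈ Set.Icc 1 n) :
    G.flowMap σ N '' G.flowSet = (G.forwardGraph σ N).flowSet := by
  have hmem := flowMap_mem_flowSet_iff hwf hacyc hinj hrange hs ht
  refine Set.Subset.antisymm (Set.image_subset_iff.2 fun x hx => (hmem x).2 hx) fun y hy => ?_
  obtain ⟨hsrc, hsnk⟩ := flowSet_forwardGraph_saturated hwf hrange hs ht hy
  have hpre : G.flowMap σ N (fun e => G.edgeSign e * y (G.oldEdge σ N e)) = y :=
    funext <| forall_edge_forwardGraph (P := fun k => G.flowMap σ N _ k = y k) |>.2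
      ⟨fun e => by rw [flowMap_oldEdge, ← mul_assoc, edgeSign_mul_self, one_mul],
        by rw [flowMap_srcEdge, hsrc], by rw [flowMap_snkEdge, hsnk]⟩
  exact ⟨_, (hmem _).1 (by rwa [hpre]), hpre⟩

end LGraph

end FP

open FP in
theorem stmt4_general (n : ℕ) (hn : 2 ≤ n) (G : LGraph) (hsrc : G.src = 1) (hsnk : G.snk = n)
    (hwf : G.WF n) (hacyc : G.Acyclic) :
    ∃ (n' : ℕ) (G' : LGraph), 2 ≤ n' ∧ G'.src = 1 ∧ G'.snk = n' ∧ G'.WF n' ∧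
      (∀ e : Fin G'.m, G'.etype e = .forward) ∧ G'.Acyclic ∧
      IntEquiv G.flowSet G'.flowSet := by
  set σ := G.topLabel n
  set N := (n + 1) * (n + 1) + 1
  have hmono : ∀ ⦃a b⦄, G.DStep a b → σ a < σ b :=
    fun _ _ => LGraph.topLabel_lt_topLabel hwf hacyc
  have hrange : ∀ v ∈ Set.Icc 1 n, 1 < σ v ∧ σ v < N := fun _ => LGraph.topLabel_mem
  have hs : G.src ∈ Set.Icc 1 n := by simp only [hsrc, Set.mem_Icc]; omega
  have ht : G.snk ∈ Set.Icc 1 n := by simp only [hsnk, Set.mem_Icc]; omega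
  have hwf' := LGraph.wf_forwardGraph hwf hmono hrange hs ht
  exact ⟨N, G.forwardGraph σ N, by have := hrange _ hs; omega, rfl, rfl, hwf',
    LGraph.etype_forwardGraph, LGraph.acyclic_of_forall_forward hwf' LGraph.etype_forwardGraph,
    intEquiv_of_injective _ LGraph.flowMap_injective
      (LGraph.image_flowMap hwf hacyc LGraph.topLabel_injOn hrange hs ht)
      LGraph.isLatticePt_flowMap_iff⟩

open FP in
/-- If `G` is acyclic, there is an acyclic directed graph `G*` all of
whose edges are forward edges such that `F_G` is integrally equivalent to `F_{G*}`. -/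
theorem stmt4 (n : ℕ) (hn : 2 ≤ n) (G : LGraph) (hsrc : G.src = 1) (hsnk : G.snk = n)
    (hwf : G.WF n) (hconn : G.Connected n) (hacyc : G.Acyclic) :
    ∃ (n' : ℕ) (G' : LGraph), 2 ≤ n' ∧ G'.src = 1 ∧ G'.snk = n' ∧ G'.WF n' ∧
      (∀ e : Fin G'.m, G'.etype e = .forward) ∧ G'.Acyclic ∧
      IntEquiv G.flowSet G'.flowSet :=
  stmt4_general n hn G hsrc hsnk hwf hacyc
end
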